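/- arXiv:2009.00578 — 5 statements merged into one kernel-verified Lean document; each statement's English description precedes it below -/
import Mathlib

section
/- Let $P\in\mathcal{S}^d$ with $\mathcal{N}_1(P)$ and $S_2 = \mathcal{N}_2(P) - \mathcal{L}_{12}(P)^\top\mathcal{N}_1(P)^{-1}\mathcal{L}_{12}(P)$ invertible. Set $K_2^* = -S_2^{-1}(\mathcal{L}_2(P)^\top - \mathcal{L}_{12}(P)^\top\mathcal{N}_1(P)^{-1}\mathcal{L}_1(P)^\top)$, and define $\mathcal{M}^{2*}(P) = \mathcal{M}(P) + \mathcal{L}_2(P)K_2^* + (\mathcal{L}_2(P)K_2^*)^\top + (K_2^*)^\top\mathcal{N}_2(P)K_2^*$ and $\mathcal{L}_1^{2*}(P) = \mathcal{L}_1(P) + K_2^{*\top}\mathcal{L}_{12}(P)^\top$. Then $\mathcal{M}^{2*}(P) - \mathcal{L}_1^{2*}(P)\mathcal{N}_1(P)^{-1}\mathcal{L}_1^{2*}(P)^\top = \mathcal{M}(P) - \mathcal{L}(P)\mathcal{N}(P)^{-1}\mathcal{L}(P)^\top$. In particular, $P$ solves the single-player Riccati equation $\mathcal{M}^{2*}(P)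 = \mathcal{L}_1^{2*}(P)\mathcal{N}_1(P)^{-1}\mathcal{L}_1^{2*}(P)^\top$ if and only if it solves the two-player equation $\mathcal{M}(P) = \mathcal{L}(P)\mathcal{N}(P)^{-1}\mathcal{L}(P)^\top$. -/
open Matrix

set_option maxHeartbeats 2000000 in
/-- Fixing player 2's feedback at `K₂*` reduces the two-player Riccati operator to the
single-player one: the two Riccati residuals coincide. -/
theorem stmt_11 {d l : ℕ} (γ : ℝ) (hγ : γ ∈ Set.Ioo (0:ℝ) 1)
    (A Q P : Matrix (Fin d) (Fin d) ℝ) (hP : P.IsSymm) (hQ : Q.IsSymm)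
    (B1 B2 : Matrix (Fin d) (Fin l) ℝ) (R1 R2 : Matrix (Fin l) (Fin l) ℝ)
    (hR1 : R1.IsSymm) (hR2 : R2.IsSymm)
    (M : Matrix (Fin d) (Fin d) ℝ) (L1 L2 : Matrix (Fin d) (Fin l) ℝ)
    (N1 N2 L12 S2 : Matrix (Fin l) (Fin l) ℝ)
    (hM : M = γ • (Aᵀ * P * A) - P + Q)
    (hL1 : L1 = γ • (Aᵀ * P * B1)) (hL2 : L2 = γ • (Aᵀ * P * B2))
    (hL12 : L12 = γ • (B1ᵀ * P * B2))
    (hN1 : N1 = γ • (B1ᵀ * P * B1) + R1) (hN2 : N2 = γ • (B2ᵀ * P * B2) - R2)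
    (hS2 : S2 = N2 - L12ᵀ * N1⁻¹ * L12)
    (hN1inv : IsUnit N1.det) (hS2inv : IsUnit S2.det)
    (K2s : Matrix (Fin l) (Fin d) ℝ)
    (hK2s : K2s = -(S2⁻¹ * (L2ᵀ - L12ᵀ * N1⁻¹ * L1ᵀ)))
    (M2s : Matrix (Fin d) (Fin d) ℝ) (L12s : Matrix (Fin d) (Fin l) ℝ)
    (hM2s : M2s = M + L2 * K2s + (L2 * K2s)ᵀ + K2sᵀ * N2 * K2s)
    (hL12s : L12s = L1 + (L12 * K2s)ᵀ) :
    (M2s - L12s * N1⁻¹ * L12sᵀ =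
      M - fromCols L1 L2 * (fromBlocks N1 L12 L12ᵀ N2)⁻¹ * (fromCols L1 L2)ᵀ) ∧
    ((M2s = L12s * N1⁻¹ * L12sᵀ) ↔
      (M = fromCols L1 L2 * (fromBlocks N1 L12 L12ᵀ N2)⁻¹ * (fromCols L1 L2)ᵀ)) := by
  haveI : Invertible N1 := N1.invertibleOfIsUnitDet hN1inv
  haveI : Invertible S2 := S2.invertibleOfIsUnitDet hS2inv
  -- symmetry facts
  have hPs : Pᵀ = P := hP
  have hN1s : N1ᵀ = N1 := by
    simp [hN1, transpose_add, transpose_smul, transpose_mul, Matrix.mul_assoc, hPs, hR1.eq]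
  have haT : (N1⁻¹)ᵀ = N1⁻¹ := by rw [transpose_nonsing_inv, hN1s]
  have hN2s : N2ᵀ = N2 := by
    simp [hN2, transpose_sub, transpose_smul, transpose_mul, Matrix.mul_assoc, hPs, hR2.eq]
  have hS2sy : S2ᵀ = S2 := by
    rw [hS2]
    simp [transpose_sub, transpose_mul, haT, hN2s, Matrix.mul_assoc]
  have hsT : (S2⁻¹)ᵀ = S2⁻¹ := by rw [transpose_nonsing_inv, hS2sy]
  have hN2' : N2 = S2 + L12ᵀ * N1⁻¹ * L12 := by rw [hS2]; noncomm_ring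
  -- block inverse
  have hBinv : (fromBlocks N1 L12 L12ᵀ N2)⁻¹ =
      fromBlocks (N1⁻¹ + N1⁻¹ * L12 * S2⁻¹ * (L12ᵀ * N1⁻¹)) (-(N1⁻¹ * (L12 * S2⁻¹)))
        (-(S2⁻¹ * (L12ᵀ * N1⁻¹))) S2⁻¹ := by
    apply inv_eq_right_inv
    rw [fromBlocks_multiply, ← fromBlocks_one, fromBlocks_inj]
    refine ⟨?_, ?_, ?_, ?_⟩
    · simp only [Matrix.mul_add, Matrix.mul_neg, Matrix.mul_assoc,
        Matrix.mul_inv_cancel_left_of_invertible, Matrix.mul_inv_of_invertible]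
      abel
    · simp only [Matrix.mul_neg, Matrix.mul_assoc, Matrix.mul_inv_cancel_left_of_invertible,
        Matrix.mul_inv_of_invertible, Matrix.mul_one]
      abel
    · rw [hN2']
      simp only [Matrix.mul_add, Matrix.add_mul, Matrix.mul_neg, Matrix.mul_assoc,
        Matrix.mul_inv_cancel_left_of_invertible, Matrix.mul_inv_of_invertible, Matrix.mul_one]
      abel
    · rw [hN2']
      simp only [Matrix.mul_neg, Matrix.add_mul, Matrix.mul_assoc,
        Matrix.mul_inv_cancel_left_of_invertible, Matrix.mul_inv_of_invertible, Matrix.mul_one]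
      abel
  -- the quadratic form with the block inverse
  have hF : fromCols L1 L2 * (fromBlocks N1 L12 L12ᵀ N2)⁻¹ * (fromCols L1 L2)ᵀ =
      L1 * N1⁻¹ * L1ᵀ +
      (L2 - L1 * N1⁻¹ * L12) * S2⁻¹ * (L2ᵀ - L12ᵀ * N1⁻¹ * L1ᵀ) := by
    rw [hBinv, transpose_fromCols, fromCols_mul_fromBlocks, fromCols_mul_fromRows]
    simp only [Matrix.mul_add, Matrix.add_mul, Matrix.sub_mul, Matrix.mul_sub,
      Matrix.mul_neg, Matrix.neg_mul, Matrix.mul_assoc]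
    abel
  -- the key algebraic identity
  have key : M2s - L12s * N1⁻¹ * L12sᵀ =
      M - fromCols L1 L2 * (fromBlocks N1 L12 L12ᵀ N2)⁻¹ * (fromCols L1 L2)ᵀ := by
    rw [hF, hM2s, hL12s, hK2s, hN2']
    simp only [transpose_neg, transpose_mul, transpose_sub, transpose_add,
      transpose_transpose, haT, hsT, Matrix.mul_add, Matrix.add_mul, Matrix.sub_mul,
      Matrix.mul_sub, Matrix.mul_neg, Matrix.neg_mul, neg_neg, neg_sub, Matrix.mul_assoc,
      Matrix.inv_mul_cancel_left_of_invertible]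
    abel
  refine ⟨key, ?_⟩
  constructor
  · intro h
    have := key
    rw [h, sub_self] at this
    linear_combination (norm := noncomm_ring) -this
  · intro h
    have := key
    rw [h, sub_self] at this
    linear_combination (norm := noncomm_ring) this
end

section
/- Suppose $\ell = d$ and $B_1, B_2, R_1, R_2$ are invertible. Let $P \in \mathcal{S}^d$ be invertible, with $\mathcal{L}_{12}(P) = \gamma B_1^\top P B_2$ invertible and $\frac{1}{\gamma}P^{-1} + B_1 R_1^{-1}B_1^\top - B_2 R_2^{-1}B_2^\top$ invertible. Then $\mathcal{M}(P) - \mathcal{L}(P)\mathcal{N}(P)^{-1}\mathcal{L}(P)^\top = Q - P + A^\top\big(\tfrac{1}{\gamma}P^{-1} + B_1 R_1^{-1}B_1^\top - B_2 R_2^{-1}B_2^\top\big)^{-1} A$. -/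
/-!
Put `G = γ • P`, `B = [B₁ B₂]` and `R = diag(R₁, -R₂)`. Then `𝓛(P) = Aᵀ G B`,
`𝓝(P) = R + Bᵀ G B`, and the middle matrix of the right-hand side is `G⁻¹ + B R⁻¹ Bᵀ`, so the
identity is the Woodbury formula `(G⁻¹ + B R⁻¹ Bᵀ)⁻¹ = G - G B (R + Bᵀ G B)⁻¹ Bᵀ G` sandwiched
between `Aᵀ` and `A`. Invertibility of `𝓝(P)` comes from that of the middle matrix through
`det (G⁻¹ + B R⁻¹ Bᵀ) * det R = det G⁻¹ * det (R + Bᵀ G B)`, an instance of Sylvester's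
determinant identity.
-/

open Matrix

namespace Matrix

variable {α : Type*} [CommRing α] {n : Type*}

theorem fromCols_mul_fromBlocks_zero_mul_transpose {n₁ n₂ : Type*} [Fintype n₁] [Fintype n₂]
    (B₁ : Matrix n n₁ α) (B₂ : Matrix n n₂ α) (C₁ : Matrix n₁ n₁ α) (C₂ : Matrix n₂ n₂ α) :
    fromCols B₁ B₂ * fromBlocks C₁ 0 0 C₂ * (fromCols B₁ B₂)ᵀ
      = B₁ * C₁ * B₁ᵀ + B₂ * C₂ * B₂ᵀ := by
  rw [transpose_fromCols, fromCols_mul_fromBlocks, fromCols_mul_fromRows]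
  simp only [Matrix.mul_zero, add_zero, zero_add]

theorem transpose_fromCols_mul_mul_fromCols [Fintype n] {n₁ n₂ : Type*} (B₁ : Matrix n n₁ α)
    (B₂ : Matrix n n₂ α) (G : Matrix n n α) :
    (fromCols B₁ B₂)ᵀ * G * fromCols B₁ B₂
      = fromBlocks (B₁ᵀ * G * B₁) (B₁ᵀ * G * B₂) (B₂ᵀ * G * B₁) (B₂ᵀ * G * B₂) := by
  rw [transpose_fromCols, fromRows_mul, fromRows_mul_fromCols]

section Woodbury

variable {m : Type*} [Fintype n] [DecidableEq n] [Fintype m] [DecidableEq m]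

theorem det_add_mul_mul_mul_det_inv {A : Matrix n n α} {C : Matrix m m α} (U : Matrix n m α)
    (V : Matrix m n α) (hA : IsUnit A.det) (hC : IsUnit C.det) :
    (A + U * C * V).det * C⁻¹.det = A.det * (C⁻¹ + V * A⁻¹ * U).det := by
  have hcap : C⁻¹ + V * A⁻¹ * U = C⁻¹ * (1 + C * V * A⁻¹ * U) := by
    simp only [Matrix.mul_add, Matrix.mul_one, Matrix.mul_assoc,
      nonsing_inv_mul_cancel_left _ _ hC]
  rw [Matrix.mul_assoc U, det_add_mul U (C * V) hA, hcap, det_mul]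
  ring

/-- Unlike `Matrix.add_mul_mul_inv_eq_sub`, invertibility is assumed of `A + U * C * V` rather
than of the capacitance matrix `C⁻¹ + V * A⁻¹ * U`. -/
theorem add_mul_mul_inv_eq_sub_of_isUnit_det {A : Matrix n n α} {C : Matrix m m α}
    (U : Matrix n m α) (V : Matrix m n α) (hA : IsUnit A.det) (hC : IsUnit C.det)
    (h : IsUnit (A + U * C * V).det) :
    (A + U * C * V)⁻¹ = A⁻¹ - A⁻¹ * U * (C⁻¹ + V * A⁻¹ * U)⁻¹ * V * A⁻¹ := by
  have hcap : IsUnit (C⁻¹ + V * A⁻¹ * U).det := by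
    have hprod := h.mul (isUnit_nonsing_inv_det C hC)
    rw [det_add_mul_mul_mul_det_inv U V hA hC] at hprod
    exact isUnit_of_mul_isUnit_right hprod
  exact add_mul_mul_inv_eq_sub A U C V ((isUnit_iff_isUnit_det A).2 hA)
    ((isUnit_iff_isUnit_det C).2 hC) ((isUnit_iff_isUnit_det _).2 hcap)

theorem riccati_compact_form {k : Type*} {G : Matrix n n α} {R : Matrix m m α}
    (A : Matrix n k α) (B : Matrix n m α) (hGt : Gᵀ = G) (hG : IsUnit G.det) (hR : IsUnit R.det)
    (h : IsUnit (G⁻¹ + B * R⁻¹ * Bᵀ).det) :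
    Aᵀ * G * A - Aᵀ * G * B * (R + Bᵀ * G * B)⁻¹ * (Aᵀ * G * B)ᵀ
      = Aᵀ * (G⁻¹ + B * R⁻¹ * Bᵀ)⁻¹ * A := by
  rw [add_mul_mul_inv_eq_sub_of_isUnit_det B Bᵀ (isUnit_nonsing_inv_det G hG)
      (isUnit_nonsing_inv_det R hR) h, nonsing_inv_nonsing_inv G hG,
    nonsing_inv_nonsing_inv R hR]
  simp only [transpose_mul, transpose_transpose, hGt, Matrix.mul_sub, Matrix.sub_mul,
    Matrix.mul_assoc]

end Woodbury

end Matrix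

section ZeroSum

variable {K : Type*} [Field K] {n : Type*} [Fintype n]

theorem fromCols_smul_mul_mul {k : Type*} (γ : K) (A : Matrix n k K) (P B₁ B₂ : Matrix n n K) :
    fromCols (γ • (Aᵀ * P * B₁)) (γ • (Aᵀ * P * B₂)) = Aᵀ * (γ • P) * fromCols B₁ B₂ := by
  rw [mul_fromCols]
  simp only [Matrix.mul_smul, Matrix.smul_mul]

theorem fromBlocks_smul_add_eq_add_transpose_fromCols_mul (γ : K) {P : Matrix n n K}
    (hP : Pᵀ = P) (B₁ B₂ R₁ R₂ : Matrix n n K) :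
    fromBlocks (γ • (B₁ᵀ * P * B₁) + R₁) (γ • (B₁ᵀ * P * B₂))
        (γ • (B₁ᵀ * P * B₂))ᵀ (γ • (B₂ᵀ * P * B₂) - R₂)
      = fromBlocks R₁ 0 0 (-R₂) + (fromCols B₁ B₂)ᵀ * (γ • P) * fromCols B₁ B₂ := by
  rw [transpose_fromCols_mul_mul_fromCols, fromBlocks_add]
  simp [transpose_mul, hP, Matrix.mul_assoc, sub_eq_add_neg, add_comm]

theorem inv_smul_add_sub_eq_inv_add_fromCols_mul [DecidableEq n] {γ : K} (hγ : γ ≠ 0)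
    {P R₁ R₂ : Matrix n n K} (B₁ B₂ : Matrix n n K) (hP : IsUnit P.det) (hR₁ : IsUnit R₁.det)
    (hR₂ : IsUnit R₂.det) :
    γ⁻¹ • P⁻¹ + B₁ * R₁⁻¹ * B₁ᵀ - B₂ * R₂⁻¹ * B₂ᵀ
      = (γ • P)⁻¹ + fromCols B₁ B₂ * (fromBlocks R₁ 0 0 (-R₂))⁻¹ * (fromCols B₁ B₂)ᵀ := by
  have hPinv : (γ • P)⁻¹ = γ⁻¹ • P⁻¹ := inv_eq_right_inv <| by
    rw [smul_mul_smul_comm, mul_nonsing_inv _ hP, mul_inv_cancel₀ hγ, one_smul]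
  have hRinv : (fromBlocks R₁ 0 0 (-R₂))⁻¹ = fromBlocks R₁⁻¹ 0 0 (-R₂⁻¹) :=
    inv_eq_right_inv <| by
      simp [fromBlocks_multiply, mul_nonsing_inv _ hR₁, mul_nonsing_inv _ hR₂]
  rw [hPinv, hRinv, fromCols_mul_fromBlocks_zero_mul_transpose]
  simp [sub_eq_add_neg, add_assoc]

end ZeroSum

theorem stmt_12_general {d : ℕ} (γ : ℝ) (hγ : γ ∈ Set.Ioo (0:ℝ) 1)
    (A Q P B1 B2 R1 R2 : Matrix (Fin d) (Fin d) ℝ)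
    (hP : P.IsSymm)
    (hR1u : IsUnit R1.det) (hR2u : IsUnit R2.det)
    (hPu : IsUnit P.det)
    (hmid : IsUnit (γ⁻¹ • P⁻¹ + B1 * R1⁻¹ * B1ᵀ - B2 * R2⁻¹ * B2ᵀ).det) :
    (γ • (Aᵀ * P * A) - P + Q) -
        fromCols (γ • (Aᵀ * P * B1)) (γ • (Aᵀ * P * B2)) *
          (fromBlocks (γ • (B1ᵀ * P * B1) + R1) (γ • (B1ᵀ * P * B2))
            (γ • (B1ᵀ * P * B2))ᵀ (γ • (B2ᵀ * P * B2) - R2))⁻¹ *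
          (fromCols (γ • (Aᵀ * P * B1)) (γ • (Aᵀ * P * B2)))ᵀ
      = Q - P + Aᵀ * (γ⁻¹ • P⁻¹ + B1 * R1⁻¹ * B1ᵀ - B2 * R2⁻¹ * B2ᵀ)⁻¹ * A := by
  have hγ0 : γ ≠ 0 := hγ.1.ne'
  have hG : IsUnit (γ • P).det := by
    rw [det_smul]
    exact ((isUnit_iff_ne_zero.2 hγ0).pow _).mul hPu
  have hR : IsUnit (fromBlocks R1 0 0 (-R2)).det := by
    rw [det_fromBlocks_zero₁₂, det_neg]
    exact hR1u.mul ((isUnit_one.neg.pow _).mul hR2u)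
  have hAGA : Aᵀ * (γ • P) * A = γ • (Aᵀ * P * A) := by
    simp only [Matrix.mul_smul, Matrix.smul_mul]
  rw [inv_smul_add_sub_eq_inv_add_fromCols_mul hγ0 B1 B2 hPu hR1u hR2u] at hmid ⊢
  rw [fromCols_smul_mul_mul, fromBlocks_smul_add_eq_add_transpose_fromCols_mul γ hP.eq B1 B2,
    ← riccati_compact_form A _ (by rw [transpose_smul, hP.eq]) hG hR hmid, hAGA]
  abel

/-- Alternative compact form of the zero-sum discrete algebraic Riccati operator when
`ℓ = d` and `B₁, B₂, R₁, R₂, P, 𝓛₁₂(P)` are invertible. -/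
theorem stmt_12 {d : ℕ} (γ : ℝ) (hγ : γ ∈ Set.Ioo (0:ℝ) 1)
    (A Q P B1 B2 R1 R2 : Matrix (Fin d) (Fin d) ℝ)
    (hP : P.IsSymm) (hQ : Q.IsSymm) (hR1 : R1.IsSymm) (hR2 : R2.IsSymm)
    (hB1 : IsUnit B1.det) (hB2 : IsUnit B2.det)
    (hR1u : IsUnit R1.det) (hR2u : IsUnit R2.det)
    (hPu : IsUnit P.det)
    (hL12 : IsUnit (γ • (B1ᵀ * P * B2)).det)
    (hmid : IsUnit (γ⁻¹ • P⁻¹ + B1 * R1⁻¹ * B1ᵀ - B2 * R2⁻¹ * B2ᵀ).det) :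
    (γ • (Aᵀ * P * A) - P + Q) -
        fromCols (γ • (Aᵀ * P * B1)) (γ • (Aᵀ * P * B2)) *
          (fromBlocks (γ • (B1ᵀ * P * B1) + R1) (γ • (B1ᵀ * P * B2))
            (γ • (B1ᵀ * P * B2))ᵀ (γ • (B2ᵀ * P * B2) - R2))⁻¹ *
          (fromCols (γ • (Aᵀ * P * B1)) (γ • (Aᵀ * P * B2)))ᵀ
      = Q - P + Aᵀ * (γ⁻¹ • P⁻¹ + B1 * R1⁻¹ * B1ᵀ - B2 * R2⁻¹ * B2ᵀ)⁻¹ * A :=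
  stmt_12_general γ hγ A Q P B1 B2 R1 R2 hP hR1u hR2u hPu hmid
end

section
/- Suppose $\ell = d$ and $B_1, B_2, R_1, R_2$ invertible. Let $P^o$ solve $P^o = \gamma(A^\top P^o + 2Q)(A + (B_1\Gamma_1 + B_2\Gamma_2)P^o)$ with $\Gamma_1 = -\tfrac12 R_1^{-1}B_1^\top$, $\Gamma_2 = \tfrac12 R_2^{-1}B_2^\top$, and assume $A^\top P^o = (P^o)^\top A$. Set $P^c = \tfrac12 A^\top P^o + Q$. If $P^c$ and $(P^c)^{-1} + \gamma(B_1 R_1^{-1}B_1^\top - B_2 R_2^{-1}B_2^\top)$ are invertible, then $P^c$ satisfies $0 = Q - P^c + A^\top\big(\tfrac{1}{\gamma}(P^c)^{-1} + B_1 R_1^{-1}B_1^\top - B_2 R_2^{-1}B_2^\top\big)^{-1}A$. -/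
/-!
Write `S = B₁R₁⁻¹B₁ᵀ - B₂R₂⁻¹B₂ᵀ`. Since `Aᵀ P^o + 2Q = 2P^c`, the open-loop equation reads
`P^o = γ P^c (2A - S P^o)`, i.e. `(γ⁻¹ (P^c)⁻¹ + S) P^o = 2A`. Inverting this matrix gives
`P^o = 2 (γ⁻¹ (P^c)⁻¹ + S)⁻¹ A`, and substituting into `P^c = ½ Aᵀ P^o + Q` is the closed-loop
equation.
-/

open Matrix

namespace Matrix

variable {n K : Type*} [Fintype n] [DecidableEq n] [Field K]

theorem inv_smul_inv_add_mul_eq_of_eq_smul_mul_sub {γ : K} (hγ : γ ≠ 0)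
    {P X Y S : Matrix n n K} (hP : IsUnit P.det) (h : X = γ • (P * (Y - S * X))) :
    (γ⁻¹ • P⁻¹ + S) * X = Y := by
  have hPX : γ⁻¹ • P⁻¹ * X = Y - S * X := by
    conv_lhs => rw [h]
    rw [Matrix.smul_mul, Matrix.mul_smul, nonsing_inv_mul_cancel_left _ _ hP, smul_smul,
      inv_mul_cancel₀ hγ, one_smul]
  rw [Matrix.add_mul, hPX, sub_add_cancel]

theorem isUnit_det_inv_smul_inv_add {γ : K} (hγ : γ ≠ 0) {P S : Matrix n n K}
    (h : IsUnit (P⁻¹ + γ • S).det) : IsUnit (γ⁻¹ • P⁻¹ + S).det := by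
  have hM : γ⁻¹ • P⁻¹ + S = γ⁻¹ • (P⁻¹ + γ • S) := by
    rw [smul_add, smul_smul, inv_mul_cancel₀ hγ, one_smul]
  rw [hM, det_smul]
  exact (IsUnit.pow _ (isUnit_iff_ne_zero.2 (inv_ne_zero hγ))).mul h

end Matrix

theorem stmt_13_general {d : ℕ} (γ : ℝ) (hγ : γ ∈ Set.Ioo (0:ℝ) 1)
    (A Q B1 B2 R1 R2 : Matrix (Fin d) (Fin d) ℝ)
    (Po : Matrix (Fin d) (Fin d) ℝ)
    (hPo : Po = γ • ((Aᵀ * Po + (2:ℝ) • Q) *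
      (A + (B1 * (-((1:ℝ)/2) • (R1⁻¹ * B1ᵀ)) + B2 * (((1:ℝ)/2) • (R2⁻¹ * B2ᵀ))) * Po)))
    (Pc : Matrix (Fin d) (Fin d) ℝ)
    (hPc : Pc = ((1:ℝ)/2) • (Aᵀ * Po) + Q)
    (hPcu : IsUnit Pc.det)
    (hmid : IsUnit (Pc⁻¹ + γ • (B1 * R1⁻¹ * B1ᵀ - B2 * R2⁻¹ * B2ᵀ)).det) :
    0 = Q - Pc + Aᵀ * (γ⁻¹ • Pc⁻¹ + B1 * R1⁻¹ * B1ᵀ - B2 * R2⁻¹ * B2ᵀ)⁻¹ * A := by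
  have hγ0 : γ ≠ 0 := hγ.1.ne'
  set S := B1 * R1⁻¹ * B1ᵀ - B2 * R2⁻¹ * B2ᵀ
  set M := γ⁻¹ • Pc⁻¹ + S
  have hopen : Po = γ • (Pc * ((2:ℝ) • A - S * Po)) := by
    have h2Pc : Aᵀ * Po + (2:ℝ) • Q = (2:ℝ) • Pc := by rw [hPc]; module
    rw [h2Pc] at hPo
    refine hPo.trans ?_
    simp only [S, Matrix.mul_smul, Matrix.smul_mul, Matrix.add_mul, Matrix.sub_mul,
      Matrix.mul_add, Matrix.mul_sub, Matrix.mul_assoc]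
    module
  have hMPo : M * Po = (2:ℝ) • A := inv_smul_inv_add_mul_eq_of_eq_smul_mul_sub hγ0 hPcu hopen
  have hPoM : Po = M⁻¹ * ((2:ℝ) • A) := by
    rw [← hMPo, nonsing_inv_mul_cancel_left _ _ (isUnit_det_inv_smul_inv_add hγ0 hmid)]
  have hclosed : Aᵀ * M⁻¹ * A = Pc - Q := by
    rw [hPc, hPoM, Matrix.mul_smul, Matrix.mul_smul, smul_smul, Matrix.mul_assoc]
    norm_num
  rw [show γ⁻¹ • Pc⁻¹ + B1 * R1⁻¹ * B1ᵀ - B2 * R2⁻¹ * B2ᵀ = M from add_sub_assoc _ _ _, hclosed]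
  abel

/-- From a solution `P^o` of the open-loop Riccati equation, the matrix
`P^c = ½ Aᵀ P^o + Q` solves the (alternative form of the) closed-loop Riccati equation. -/
theorem stmt_13 {d : ℕ} (γ : ℝ) (hγ : γ ∈ Set.Ioo (0:ℝ) 1)
    (A Q B1 B2 R1 R2 : Matrix (Fin d) (Fin d) ℝ)
    (hQ : Q.IsSymm) (hR1 : R1.IsSymm) (hR2 : R2.IsSymm)
    (hB1 : IsUnit B1.det) (hB2 : IsUnit B2.det)
    (hR1u : IsUnit R1.det) (hR2u : IsUnit R2.det)
    (Po : Matrix (Fin d) (Fin d) ℝ)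
    (hPo : Po = γ • ((Aᵀ * Po + (2:ℝ) • Q) *
      (A + (B1 * (-((1:ℝ)/2) • (R1⁻¹ * B1ᵀ)) + B2 * (((1:ℝ)/2) • (R2⁻¹ * B2ᵀ))) * Po)))
    (hsym : Aᵀ * Po = Poᵀ * A)
    (Pc : Matrix (Fin d) (Fin d) ℝ)
    (hPc : Pc = ((1:ℝ)/2) • (Aᵀ * Po) + Q)
    (hPcu : IsUnit Pc.det)
    (hmid : IsUnit (Pc⁻¹ + γ • (B1 * R1⁻¹ * B1ᵀ - B2 * R2⁻¹ * B2ᵀ)).det) :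
    0 = Q - Pc + Aᵀ * (γ⁻¹ • Pc⁻¹ + B1 * R1⁻¹ * B1ᵀ - B2 * R2⁻¹ * B2ᵀ)⁻¹ * A :=
  stmt_13_general γ hγ A Q B1 B2 R1 R2 Po hPo Pc hPc hPcu hmid
end

section
/- Suppose additionally that $A$ is invertible, and let $P^o = 2A^{-\top}(P^c - Q)$ where $P^c$ solves $0 = Q - P^c + A^\top(\tfrac{1}{\gamma}(P^c)^{-1} + B_1R_1^{-1}B_1^\top - B_2R_2^{-1}B_2^\top)^{-1}A$ with $P^c$ invertible. Then with $\check B = [B_1, B_2]$ and $\check R = \mathrm{diag}(R_1, -R_2)$, the closed-loop feedback gains satisfy $-B_1 K_1^* + B_2 K_2^* = -\tfrac12 \check B \check R^{-1}\check B^\top P^o = B_1\Gamma_1 P^o + B_2\Gamma_2 P^o$, where $K_1^*, K_2^*$ are defined by $\begin{pmatrix}-K_1^*\\ K_2^*\end{pmatrix} = -(\gamma\check B^\top P^c\check B + \check R)^{-1}\gamma\check B^\top P^c A$, $\Gamma_1 = -\tfrac12 R_1^{-1}B_1^\top$, $\Gamma_2 = \tfrac12 R_2^{-1}B_2^\top$.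 -/
/-!
Write `Ŝ = B̌Ř⁻¹B̌ᵀ`; block-diagonality of `Ř` gives `Ŝ = B₁R₁⁻¹B₁ᵀ - B₂R₂⁻¹B₂ᵀ`, so the
Riccati equation reads `P^c - Q = Aᵀ M⁻¹ A` with `M = (γP^c)⁻¹ + Ŝ`, i.e. `P^o = 2M⁻¹A`.
The push-through identity `B̌(B̌ᵀPB̌ + Ř)⁻¹B̌ᵀP = Ŝ(P⁻¹ + Ŝ)⁻¹`, applied with `P = γP^c`, turns
the closed-loop correction `-B̌(γB̌ᵀP^cB̌ + Ř)⁻¹γB̌ᵀP^cA` into `-ŜM⁻¹A = -½ŜP^o`.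
-/

open Matrix
namespace Matrix

variable {m n n₁ n₂ α : Type*} [Fintype n] [DecidableEq n] [Fintype n₁] [DecidableEq n₁]
  [Fintype n₂] [DecidableEq n₂] [CommRing α]

theorem fromCols_mul_inv_fromBlocks_diag_mul_fromRows (B₁ : Matrix m n₁ α) (B₂ : Matrix m n₂ α)
    (C₁ : Matrix n₁ m α) (C₂ : Matrix n₂ m α) {R₁ : Matrix n₁ n₁ α} {R₂ : Matrix n₂ n₂ α}
    (h₁ : IsUnit R₁.det) (h₂ : IsUnit R₂.det) :
    fromCols B₁ B₂ * (fromBlocks R₁ 0 0 R₂)⁻¹ * fromRows C₁ C₂ =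
      B₁ * R₁⁻¹ * C₁ + B₂ * R₂⁻¹ * C₂ := by
  have hR : IsUnit R₁ ↔ IsUnit R₂ := by
    simp only [isUnit_iff_isUnit_det, h₁, h₂]
  rw [inv_fromBlocks_zero₂₁_of_isUnit_iff _ _ _ hR, fromCols_mul_fromBlocks,
    fromCols_mul_fromRows]
  simp

theorem isUnit_det_fromBlocks_diag {R₁ : Matrix n₁ n₁ α} {R₂ : Matrix n₂ n₂ α}
    (h₁ : IsUnit R₁.det) (h₂ : IsUnit R₂.det) : IsUnit (fromBlocks R₁ 0 0 R₂).det := by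
  rw [det_fromBlocks_zero₂₁]
  exact h₁.mul h₂

theorem isUnit_det_smul {A : Matrix n n α} {k : α} (hk : IsUnit k) (hA : IsUnit A.det) :
    IsUnit (k • A).det := by
  rw [det_smul]
  exact (hk.pow _).mul hA

theorem isUnit_det_neg {A : Matrix n n α} (hA : IsUnit A.det) : IsUnit (-A).det := by
  simpa using isUnit_det_smul isUnit_one.neg hA

theorem fromCols_mul_inv_fromBlocks_neg_mul_transpose (B₁ : Matrix m n₁ α) (B₂ : Matrix m n₂ α)
    {R₁ : Matrix n₁ n₁ α} {R₂ : Matrix n₂ n₂ α} (h₁ : IsUnit R₁.det) (h₂ : IsUnit R₂.det) :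
    fromCols B₁ B₂ * (fromBlocks R₁ 0 0 (-R₂))⁻¹ * (fromCols B₁ B₂)ᵀ =
      B₁ * R₁⁻¹ * B₁ᵀ - B₂ * R₂⁻¹ * B₂ᵀ := by
  have hneg : (-R₂)⁻¹ = -R₂⁻¹ := inv_eq_left_inv (by rw [neg_mul_neg, nonsing_inv_mul _ h₂])
  rw [transpose_fromCols,
    fromCols_mul_inv_fromBlocks_diag_mul_fromRows _ _ _ _ h₁ (isUnit_det_neg h₂), hneg,
    Matrix.mul_neg, Matrix.neg_mul, ← sub_eq_add_neg]

variable [Fintype m] [DecidableEq m]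

theorem isUnit_det_inv_add_mul_inv_mul {U : Matrix m n α} {V : Matrix n m α}
    {P : Matrix m m α} {R : Matrix n n α} (hP : IsUnit P.det) (hR : IsUnit R.det)
    (hN : IsUnit (V * P * U + R).det) : IsUnit (P⁻¹ + U * R⁻¹ * V).det := by
  have hdet : P.det * (P⁻¹ + U * R⁻¹ * V).det = R⁻¹.det * (V * P * U + R).det := by
    calc P.det * (P⁻¹ + U * R⁻¹ * V).det = (1 + (P * U) * (R⁻¹ * V)).det := by
          rw [← det_mul, Matrix.mul_add, mul_nonsing_inv P hP]
          simp only [Matrix.mul_assoc]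
      _ = (1 + (R⁻¹ * V) * (P * U)).det := det_one_add_mul_comm _ _
      _ = R⁻¹.det * (V * P * U + R).det := by
          rw [← det_mul, Matrix.mul_add, nonsing_inv_mul R hR, add_comm]
          simp only [Matrix.mul_assoc]
  have : IsUnit (P.det * (P⁻¹ + U * R⁻¹ * V).det) := by
    rw [hdet]
    exact (isUnit_nonsing_inv_det _ hR).mul hN
  exact (IsUnit.mul_iff.mp this).2

theorem mul_inv_mul_mul_eq_mul_inv_mul_mul_inv {U : Matrix m n α} {V : Matrix n m α}
    {P : Matrix m m α} {R : Matrix n n α} (hP : IsUnit P.det) (hR : IsUnit R.det)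
    (hN : IsUnit (V * P * U + R).det) :
    U * (V * P * U + R)⁻¹ * V * P = U * R⁻¹ * V * (P⁻¹ + U * R⁻¹ * V)⁻¹ := by
  have hmul : U * (V * P * U + R)⁻¹ * V * P * (P⁻¹ + U * R⁻¹ * V) = U * R⁻¹ * V :=
    calc U * (V * P * U + R)⁻¹ * V * P * (P⁻¹ + U * R⁻¹ * V)
        = U * (V * P * U + R)⁻¹ * ((V * P * U + R) * (R⁻¹ * V)) := by
          simp only [Matrix.mul_add, Matrix.add_mul, Matrix.mul_assoc,
            mul_nonsing_inv_cancel_left R _ hR, mul_nonsing_inv P hP, Matrix.mul_one]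
          abel
      _ = U * R⁻¹ * V := by
          rw [Matrix.mul_assoc U, nonsing_inv_mul_cancel_left _ _ hN, Matrix.mul_assoc U]
  calc U * (V * P * U + R)⁻¹ * V * P
      = U * (V * P * U + R)⁻¹ * V * P * (P⁻¹ + U * R⁻¹ * V) * (P⁻¹ + U * R⁻¹ * V)⁻¹ :=
        (mul_nonsing_inv_cancel_right _ _ (isUnit_det_inv_add_mul_inv_mul hP hR hN)).symm
    _ = U * R⁻¹ * V * (P⁻¹ + U * R⁻¹ * V)⁻¹ := by rw [hmul]

end Matrix

theorem stmt_14_general {d : ℕ} (γ : ℝ) (hγ : γ ∈ Set.Ioo (0:ℝ) 1)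
    (A Q B1 B2 R1 R2 : Matrix (Fin d) (Fin d) ℝ)
    (hA : IsUnit A.det)
    (hR1u : IsUnit R1.det) (hR2u : IsUnit R2.det)
    (Pc : Matrix (Fin d) (Fin d) ℝ) (hPcu : IsUnit Pc.det)
    (hPc : 0 = Q - Pc + Aᵀ * (γ⁻¹ • Pc⁻¹ + B1 * R1⁻¹ * B1ᵀ - B2 * R2⁻¹ * B2ᵀ)⁻¹ * A)
    (Po : Matrix (Fin d) (Fin d) ℝ)
    (hPo : Po = (2:ℝ) • ((Aᵀ)⁻¹ * (Pc - Q)))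
    (hNu : IsUnit
      (γ • ((fromCols B1 B2)ᵀ * Pc * fromCols B1 B2) + fromBlocks R1 0 0 (-R2)).det)
    (K1s K2s : Matrix (Fin d) (Fin d) ℝ)
    (hKs : fromRows (-K1s) K2s =
      -((γ • ((fromCols B1 B2)ᵀ * Pc * fromCols B1 B2) + fromBlocks R1 0 0 (-R2))⁻¹ *
        (γ • ((fromCols B1 B2)ᵀ * Pc * A)))) :
    -(B1 * K1s) + B2 * K2s =
      -((1:ℝ)/2) • (fromCols B1 B2 * (fromBlocks R1 0 0 (-R2))⁻¹ *
        (fromCols B1 B2)ᵀ * Po) ∧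
    -(B1 * K1s) + B2 * K2s =
      B1 * (-((1:ℝ)/2) • (R1⁻¹ * B1ᵀ)) * Po + B2 * (((1:ℝ)/2) • (R2⁻¹ * B2ᵀ)) * Po := by
  set Bc := fromCols B1 B2 with hBc
  set Rc := fromBlocks R1 0 0 (-R2)
  have hRc : IsUnit Rc.det := isUnit_det_fromBlocks_diag hR1u (isUnit_det_neg hR2u)
  have hγPc : IsUnit (γ • Pc).det := isUnit_det_smul (isUnit_iff_ne_zero.2 hγ.1.ne') hPcu
  have hS : Bc * Rc⁻¹ * Bcᵀ = B1 * R1⁻¹ * B1ᵀ - B2 * R2⁻¹ * B2ᵀ :=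
    fromCols_mul_inv_fromBlocks_neg_mul_transpose B1 B2 hR1u hR2u
  have hM : (γ • Pc)⁻¹ + Bc * Rc⁻¹ * Bcᵀ =
      γ⁻¹ • Pc⁻¹ + B1 * R1⁻¹ * B1ᵀ - B2 * R2⁻¹ * B2ᵀ := by
    have hγinv : (γ • Pc)⁻¹ = γ⁻¹ • Pc⁻¹ := inv_eq_left_inv (by
      rw [smul_mul_smul_comm, inv_mul_cancel₀ hγ.1.ne', nonsing_inv_mul _ hPcu, one_smul])
    rw [hγinv, hS, add_sub_assoc]
  have hPoM : Po = (2:ℝ) • (((γ • Pc)⁻¹ + Bc * Rc⁻¹ * Bcᵀ)⁻¹ * A) := by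
    have hPcQ : Pc - Q = Aᵀ * (γ⁻¹ • Pc⁻¹ + B1 * R1⁻¹ * B1ᵀ - B2 * R2⁻¹ * B2ᵀ)⁻¹ * A := by
      rw [← neg_sub]
      exact neg_eq_of_add_eq_zero_right hPc.symm
    rw [hPo, hPcQ, hM, Matrix.mul_assoc,
      nonsing_inv_mul_cancel_left _ _ (by rwa [det_transpose])]
  have hN : γ • (Bcᵀ * Pc * Bc) + Rc = Bcᵀ * (γ • Pc) * Bc + Rc := by
    rw [Matrix.mul_smul, Matrix.smul_mul]
  have hclosed : -(B1 * K1s) + B2 * K2s =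
      -(Bc * (Bcᵀ * (γ • Pc) * Bc + Rc)⁻¹ * Bcᵀ * (γ • Pc) * A) := by
    rw [← Matrix.mul_neg, ← fromCols_mul_fromRows, ← hBc, hKs, hN]
    generalize (Bcᵀ * (γ • Pc) * Bc + Rc)⁻¹ = Ninv
    simp only [Matrix.mul_neg, Matrix.mul_smul, Matrix.smul_mul, Matrix.mul_assoc]
  have hopen : -(B1 * K1s) + B2 * K2s = -((1:ℝ)/2) • (Bc * Rc⁻¹ * Bcᵀ * Po) := by
    rw [hclosed, mul_inv_mul_mul_eq_mul_inv_mul_mul_inv hγPc hRc (hN ▸ hNu), hPoM]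
    simp only [Matrix.mul_smul, smul_smul, Matrix.mul_assoc]
    norm_num
  refine ⟨hopen, ?_⟩
  rw [hopen, hS]
  simp only [Matrix.mul_smul, Matrix.smul_mul, Matrix.sub_mul, Matrix.mul_assoc]
  module

/-- The closed-loop combined drift correction `-B₁K₁* + B₂K₂*` coincides with the open-loop
one `(B₁Γ₁ + B₂Γ₂)P^o`, where `P^o = 2A⁻ᵀ(P^c - Q)`. -/
theorem stmt_14 {d : ℕ} (γ : ℝ) (hγ : γ ∈ Set.Ioo (0:ℝ) 1)
    (A Q B1 B2 R1 R2 : Matrix (Fin d) (Fin d) ℝ)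
    (hQ : Q.IsSymm) (hR1 : R1.IsSymm) (hR2 : R2.IsSymm)
    (hA : IsUnit A.det) (hB1 : IsUnit B1.det) (hB2 : IsUnit B2.det)
    (hR1u : IsUnit R1.det) (hR2u : IsUnit R2.det)
    (Pc : Matrix (Fin d) (Fin d) ℝ) (hPcsymm : Pc.IsSymm) (hPcu : IsUnit Pc.det)
    (hPc : 0 = Q - Pc + Aᵀ * (γ⁻¹ • Pc⁻¹ + B1 * R1⁻¹ * B1ᵀ - B2 * R2⁻¹ * B2ᵀ)⁻¹ * A)
    (Po : Matrix (Fin d) (Fin d) ℝ)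
    (hPo : Po = (2:ℝ) • ((Aᵀ)⁻¹ * (Pc - Q)))
    (hNu : IsUnit
      (γ • ((fromCols B1 B2)ᵀ * Pc * fromCols B1 B2) + fromBlocks R1 0 0 (-R2)).det)
    (K1s K2s : Matrix (Fin d) (Fin d) ℝ)
    (hKs : fromRows (-K1s) K2s =
      -((γ • ((fromCols B1 B2)ᵀ * Pc * fromCols B1 B2) + fromBlocks R1 0 0 (-R2))⁻¹ *
        (γ • ((fromCols B1 B2)ᵀ * Pc * A)))) :
    -(B1 * K1s) + B2 * K2s =
      -((1:ℝ)/2) • (fromCols B1 B2 * (fromBlocks R1 0 0 (-R2))⁻¹ *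
        (fromCols B1 B2)ᵀ * Po) ∧
    -(B1 * K1s) + B2 * K2s =
      B1 * (-((1:ℝ)/2) • (R1⁻¹ * B1ᵀ)) * Po + B2 * (((1:ℝ)/2) • (R2⁻¹ * B2ᵀ)) * Po :=
  stmt_14_general γ hγ A Q B1 B2 R1 R2 hA hR1u hR2u Pc hPcu hPc Po hPo hNu K1s K2s hKs
end

section
/- Let $(y_t)$ follow $y_{t+1} = (A - B_1K_1 + B_2K_2)y_t + \epsilon^1_{t+1}$, $y_0 = \tilde y$, with $\mathbb{E}[\sum_t \gamma^t\|y_t\|^2]<\infty$, noise i.i.d. mean zero. Define $C_y(K_1,K_2,\tilde y) = \mathbb{E}[\sum_{t\ge 0}\gamma^t(y_t^\top Q y_t + u_{1,t}^\top R_1 u_{1,t} - u_{2,t}^\top R_2 u_{2,t})]$ with $u_{1,t}=-K_1 y_t$, $u_{2,t}=K_2 y_t$, and $C_y^*(P;\tilde y) = \tilde y^\top P\tilde y + \tfrac{\gamma}{1-\gamma}\mathbb{E}[(\epsilon^1_1)^\top P\epsilon^1_1]$. Then for every $P \in \mathcal{S}^d$: $C_y(K_1,K_2,\tilde y) - C_y^*(P;\tilde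 y) = \mathbb{E}\big[\sum_{t\ge 0}\gamma^t (y_t,u_{1,t},u_{2,t})^\top \begin{pmatrix}\mathcal{M}(P) & \mathcal{L}_1(P) & \mathcal{L}_2(P)\\ \mathcal{L}_1(P)^\top & \mathcal{N}_1(P) & \mathcal{L}_{12}(P)\\ \mathcal{L}_2(P)^\top & \mathcal{L}_{12}(P)^\top & \mathcal{N}_2(P)\end{pmatrix}(y_t,u_{1,t},u_{2,t})\big]$. -/
/-!
Write `Φ = A - B₁K₁ + B₂K₂`, `a t = 𝔼[yₜᵀ P yₜ]` and `σ = 𝔼[ε₁ᵀ P ε₁]`. At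
`(y, -K₁y, K₂y)` the block form equals `γ (Φy)ᵀ P (Φy) - yᵀ P y` plus the stage cost. Since `yₜ`
is a measurable function of `ε₁, …, εₜ`, it is independent of the centred `εₜ₊₁`, so the cross
terms of `y_{t+1} = Φ yₜ + εₜ₊₁` vanish and, the noise being identically distributed,
`𝔼[(Φyₜ)ᵀ P (Φyₜ)] = a (t+1) - σ`. The `t`-th summand is therefore
`γ^{t+1} a (t+1) - γ^t a t - γ^{t+1} σ` plus the discounted stage cost; the first two terms telescope to `-a 0 = -ỹᵀ P ỹ` (the weighted sequence is summable by the `L²` assumption) and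
the third sums to `γ σ / (1 - γ)`.
-/

open Matrix MeasureTheory ProbabilityTheory

section Algebra

variable {n m : Type*} [Fintype n] [Fintype m]

lemma mulVec_dotProduct_mulVec (K : Matrix m n ℝ) (R : Matrix m m ℝ) (y : n → ℝ) :
    K *ᵥ y ⬝ᵥ R *ᵥ (K *ᵥ y) = y ⬝ᵥ (Kᵀ * R * K) *ᵥ y := by
  rw [← mulVec_mulVec, ← mulVec_mulVec, dotProduct_mulVec y, vecMul_transpose]

lemma dotProduct_transpose_mulVec_eq_mulVec_dotProduct (M : Matrix m n ℝ) (x : n → ℝ)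
    (z : m → ℝ) : x ⬝ᵥ Mᵀ *ᵥ z = M *ᵥ x ⬝ᵥ z := by
  rw [dotProduct_mulVec, vecMul_transpose]

lemma abs_dotProduct_mulVec_le (M : Matrix m n ℝ) (x : m → ℝ) (z : n → ℝ) :
    |x ⬝ᵥ M *ᵥ z| ≤ (∑ i, ∑ j, |M i j|) * (‖x‖ * ‖z‖) := by
  simp only [dotProduct, mulVec, Finset.mul_sum, Finset.sum_mul]
  refine (Finset.abs_sum_le_sum_abs _ _).trans (Finset.sum_le_sum fun i _ => ?_)
  refine (Finset.abs_sum_le_sum_abs _ _).trans (Finset.sum_le_sum fun j _ => ?_)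
  rw [abs_mul, abs_mul, mul_left_comm]
  gcongr
  exacts [norm_le_pi_norm x i, norm_le_pi_norm z j]

lemma abs_dotProduct_mulVec_self_le (M : Matrix n n ℝ) (x : n → ℝ) :
    |x ⬝ᵥ M *ᵥ x| ≤ (∑ i, ∑ j, |M i j|) * ‖x‖ ^ 2 :=
  (abs_dotProduct_mulVec_le M x x).trans_eq (by ring)

/-- The matrix of the paper with blocks `𝓜(P)`, `𝓛ᵢ(P)`, `𝓛₁₂(P)`, `𝓝ᵢ(P)`. -/
def riccatiBlock (γ : ℝ) (A Q P : Matrix n n ℝ) (B1 B2 : Matrix n m ℝ) (R1 R2 : Matrix m m ℝ) :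
    Matrix (n ⊕ (m ⊕ m)) (n ⊕ (m ⊕ m)) ℝ :=
  fromBlocks (γ • (Aᵀ * P * A) - P + Q)
    (fromCols (γ • (Aᵀ * P * B1)) (γ • (Aᵀ * P * B2)))
    (fromRows (γ • (Aᵀ * P * B1))ᵀ (γ • (Aᵀ * P * B2))ᵀ)
    (fromBlocks (γ • (B1ᵀ * P * B1) + R1) (γ • (B1ᵀ * P * B2))
      (γ • (B1ᵀ * P * B2))ᵀ (γ • (B2ᵀ * P * B2) - R2))

lemma sumElim_dotProduct_riccatiBlock_mulVec (γ : ℝ) (A Q : Matrix n n ℝ) {P : Matrix n n ℝ}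
    (hP : Pᵀ = P) (B1 B2 : Matrix n m ℝ) (R1 R2 : Matrix m m ℝ) (y : n → ℝ) (u1 u2 : m → ℝ) :
    Sum.elim y (Sum.elim u1 u2) ⬝ᵥ riccatiBlock γ A Q P B1 B2 R1 R2 *ᵥ Sum.elim y (Sum.elim u1 u2)
      = γ * ((A *ᵥ y + B1 *ᵥ u1 + B2 *ᵥ u2) ⬝ᵥ P *ᵥ (A *ᵥ y + B1 *ᵥ u1 + B2 *ᵥ u2))
        - y ⬝ᵥ P *ᵥ y + (y ⬝ᵥ Q *ᵥ y + u1 ⬝ᵥ R1 *ᵥ u1 - u2 ⬝ᵥ R2 *ᵥ u2) := by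
  simp only [riccatiBlock, fromBlocks_mulVec, fromCols_mulVec_sumElim, fromRows_mulVec,
    sumElim_dotProduct_sumElim, Sum.elim_comp_inl, Sum.elim_comp_inr, transpose_smul,
    transpose_mul, transpose_transpose, hP, add_mulVec, sub_mulVec, smul_mulVec,
    ← mulVec_mulVec, dotProduct_add, add_dotProduct, dotProduct_sub, dotProduct_smul, smul_eq_mul,
    mulVec_add, dotProduct_transpose_mulVec_eq_mulVec_dotProduct]
  ring

lemma sumElim_dotProduct_riccatiBlock_mulVec_closedLoop (γ : ℝ) (A Q : Matrix n n ℝ)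
    {P : Matrix n n ℝ} (hP : Pᵀ = P) (B1 B2 : Matrix n m ℝ) (R1 R2 : Matrix m m ℝ)
    (K1 K2 : Matrix m n ℝ) (y : n → ℝ) :
    Sum.elim y (Sum.elim (-(K1 *ᵥ y)) (K2 *ᵥ y)) ⬝ᵥ riccatiBlock γ A Q P B1 B2 R1 R2 *ᵥ
        Sum.elim y (Sum.elim (-(K1 *ᵥ y)) (K2 *ᵥ y))
      = γ * ((A - B1 * K1 + B2 * K2) *ᵥ y ⬝ᵥ P *ᵥ ((A - B1 * K1 + B2 * K2) *ᵥ y))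
        - y ⬝ᵥ P *ᵥ y + y ⬝ᵥ (Q + K1ᵀ * R1 * K1 - K2ᵀ * R2 * K2) *ᵥ y := by
  have hΦ : A *ᵥ y + B1 *ᵥ -(K1 *ᵥ y) + B2 *ᵥ (K2 *ᵥ y) = (A - B1 * K1 + B2 * K2) *ᵥ y := by
    rw [add_mulVec, sub_mulVec, mulVec_neg, mulVec_mulVec, mulVec_mulVec, sub_eq_add_neg]
  rw [sumElim_dotProduct_riccatiBlock_mulVec γ A Q hP, hΦ, neg_dotProduct, mulVec_neg,
    dotProduct_neg, neg_neg, mulVec_dotProduct_mulVec K1, mulVec_dotProduct_mulVec K2,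
    sub_mulVec (Q + _), add_mulVec Q, dotProduct_sub, dotProduct_add]

end Algebra

section Integrability

variable {Ω : Type*} [MeasurableSpace Ω] {μ : Measure Ω} {n m : Type*} [Fintype n] [Fintype m]

theorem MeasureTheory.MemLp.mulVec {p : ENNReal} {X : Ω → n → ℝ} (hX : MemLp X p μ)
    (M : Matrix m n ℝ) : MemLp (fun ω => M *ᵥ X ω) p μ :=
  (Matrix.mulVecLin M).toContinuousLinearMap.comp_memLp' hX

theorem MeasureTheory.MemLp.integrable_dotProduct_mulVec {X : Ω → n → ℝ} (hX : MemLp X 2 μ)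
    (M : Matrix n n ℝ) : Integrable (fun ω => X ω ⬝ᵥ M *ᵥ X ω) μ := by
  refine (hX.norm.integrable_sq.const_mul (∑ i, ∑ j, |M i j|)).mono' ?_
    (ae_of_all _ fun ω => abs_dotProduct_mulVec_self_le M (X ω))
  exact (by fun_prop : Continuous fun x : n → ℝ => x ⬝ᵥ M *ᵥ x).comp_aestronglyMeasurable hX.1

lemma abs_integral_dotProduct_mulVec_le {X : Ω → n → ℝ} (hX : MemLp X 2 μ) (M : Matrix n n ℝ) :
    |∫ ω, X ω ⬝ᵥ M *ᵥ X ω ∂μ| ≤ (∑ i, ∑ j, |M i j|) * ∫ ω, ‖X ω‖ ^ 2 ∂μ := by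
  rw [← integral_const_mul]
  exact abs_integral_le_integral_abs.trans (integral_mono (hX.integrable_dotProduct_mulVec M).abs
    (hX.norm.integrable_sq.const_mul _) fun ω => abs_dotProduct_mulVec_self_le M (X ω))

lemma summable_mul_integral_dotProduct_mulVec {w : ℕ → ℝ} (hw : ∀ t, 0 ≤ w t)
    {X : ℕ → Ω → n → ℝ} (hX : ∀ t, MemLp (X t) 2 μ)
    (hsum : Summable fun t => w t * ∫ ω, ‖X t ω‖ ^ 2 ∂μ) (M : Matrix n n ℝ) :
    Summable fun t => w t * ∫ ω, X t ω ⬝ᵥ M *ᵥ X t ω ∂μ := by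
  refine (hsum.mul_left (∑ i, ∑ j, |M i j|)).of_norm_bounded fun t => ?_
  rw [Real.norm_eq_abs, abs_mul, abs_of_nonneg (hw t), mul_left_comm]
  exact mul_le_mul_of_nonneg_left (abs_integral_dotProduct_mulVec_le (hX t) M) (hw t)

lemma integral_dotProduct_riccatiBlock_mulVec_closedLoop (γ : ℝ) (A Q : Matrix n n ℝ)
    {P : Matrix n n ℝ} (hP : Pᵀ = P) (B1 B2 : Matrix n m ℝ) (R1 R2 : Matrix m m ℝ)
    (K1 K2 : Matrix m n ℝ) {X : Ω → n → ℝ} (hX : MemLp X 2 μ) :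
    ∫ ω, Sum.elim (X ω) (Sum.elim (-(K1 *ᵥ X ω)) (K2 *ᵥ X ω)) ⬝ᵥ
        riccatiBlock γ A Q P B1 B2 R1 R2 *ᵥ Sum.elim (X ω) (Sum.elim (-(K1 *ᵥ X ω)) (K2 *ᵥ X ω)) ∂μ
      = γ * ∫ ω, (A - B1 * K1 + B2 * K2) *ᵥ X ω ⬝ᵥ P *ᵥ ((A - B1 * K1 + B2 * K2) *ᵥ X ω) ∂μ
        - ∫ ω, X ω ⬝ᵥ P *ᵥ X ω ∂μ
        + ∫ ω, X ω ⬝ᵥ (Q + K1ᵀ * R1 * K1 - K2ᵀ * R2 * K2) *ᵥ X ω ∂μ := by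
  have hΦX := ((hX.mulVec (A - B1 * K1 + B2 * K2)).integrable_dotProduct_mulVec P).const_mul γ
  simp_rw [sumElim_dotProduct_riccatiBlock_mulVec_closedLoop γ A Q hP]
  rw [integral_add, integral_sub, integral_const_mul]
  exacts [hΦX, hX.integrable_dotProduct_mulVec P, hΦX.sub (hX.integrable_dotProduct_mulVec P),
    hX.integrable_dotProduct_mulVec _]

end Integrability

section Independence

variable {Ω : Type*} [MeasurableSpace Ω] {μ : Measure Ω} {n : Type*} [Fintype n]

lemma ProbabilityTheory.IndepFun.integrable_mul_eval {X Y : Ω → n → ℝ} (hXY : IndepFun X Y μ)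
    (hX : Integrable X μ) (hY : Integrable Y μ) (i : n) :
    Integrable (fun ω => X ω i * Y ω i) μ :=
  (hXY.comp (measurable_pi_apply i) (measurable_pi_apply i)).integrable_mul (hX.eval i) (hY.eval i)

lemma ProbabilityTheory.IndepFun.integrable_dotProduct {X Y : Ω → n → ℝ} (hXY : IndepFun X Y μ)
    (hX : Integrable X μ) (hY : Integrable Y μ) : Integrable (fun ω => X ω ⬝ᵥ Y ω) μ :=
  integrable_finsetSum _ fun i _ => hXY.integrable_mul_eval hX hY i

lemma ProbabilityTheory.IndepFun.integral_dotProduct_eq_zero {X Y : Ω → n → ℝ}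
    (hXY : IndepFun X Y μ) (hX : Integrable X μ) (hY : Integrable Y μ) (hY0 : ∫ ω, Y ω ∂μ = 0) :
    ∫ ω, X ω ⬝ᵥ Y ω ∂μ = 0 := by
  simp only [dotProduct]
  rw [integral_finsetSum _ fun i _ => hXY.integrable_mul_eval hX hY i]
  refine Finset.sum_eq_zero fun i _ => ?_
  have hi : IndepFun (fun ω => X ω i) (fun ω => Y ω i) μ :=
    hXY.comp (measurable_pi_apply i) (measurable_pi_apply i)
  rw [hi.integral_fun_mul_eq_mul_integral (hX.eval i).1 (hY.eval i).1, ← eval_integral hY.eval,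
    hY0, Pi.zero_apply, mul_zero]

lemma ProbabilityTheory.IndepFun.integral_add_dotProduct_mulVec_add [IsFiniteMeasure μ]
    {X Y : Ω → n → ℝ} (hXY : IndepFun X Y μ) (hX : MemLp X 2 μ) (hY : MemLp Y 2 μ)
    (hY0 : ∫ ω, Y ω ∂μ = 0) (M : Matrix n n ℝ) :
    ∫ ω, (X ω + Y ω) ⬝ᵥ M *ᵥ (X ω + Y ω) ∂μ
      = ∫ ω, X ω ⬝ᵥ M *ᵥ X ω ∂μ + ∫ ω, Y ω ⬝ᵥ M *ᵥ Y ω ∂μ := by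
  have hindep : IndepFun (fun ω => (M + Mᵀ) *ᵥ X ω) Y μ :=
    hXY.comp (by fun_prop : Measurable fun x : n → ℝ => (M + Mᵀ) *ᵥ x) measurable_id
  have hZ : Integrable (fun ω => (M + Mᵀ) *ᵥ X ω) μ := (hX.mulVec _).integrable one_le_two
  have hexpand : ∀ ω, (X ω + Y ω) ⬝ᵥ M *ᵥ (X ω + Y ω)
      = X ω ⬝ᵥ M *ᵥ X ω + (M + Mᵀ) *ᵥ X ω ⬝ᵥ Y ω + Y ω ⬝ᵥ M *ᵥ Y ω := by
    intro ω
    rw [add_mulVec, add_dotProduct (M *ᵥ X ω), dotProduct_comm (Mᵀ *ᵥ X ω),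
      Matrix.dotProduct_transpose_mulVec, dotProduct_comm (M *ᵥ X ω)]
    simp only [mulVec_add, dotProduct_add, add_dotProduct]
    ring
  have hcross : Integrable (fun ω => (M + Mᵀ) *ᵥ X ω ⬝ᵥ Y ω) μ :=
    hindep.integrable_dotProduct hZ (hY.integrable one_le_two)
  simp only [hexpand]
  rw [integral_add (f := fun ω => X ω ⬝ᵥ M *ᵥ X ω + (M + Mᵀ) *ᵥ X ω ⬝ᵥ Y ω)
      ((hX.integrable_dotProduct_mulVec M).add hcross) (hY.integrable_dotProduct_mulVec M),
    integral_add (hX.integrable_dotProduct_mulVec M) hcross,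
    hindep.integral_dotProduct_eq_zero hZ (hY.integrable one_le_two) hY0, add_zero]

end Independence

section Recursion

variable {Ω α β : Type*} [MeasurableSpace α] [MeasurableSpace β]

lemma exists_measurable_eq_of_recursion {f : α → β → α} (hf : Measurable (Function.uncurry f))
    {x : ℕ → Ω → α} {e : ℕ → Ω → β} {x₀ : α} (h0 : ∀ ω, x 0 ω = x₀)
    (hrec : ∀ t ω, x (t + 1) ω = f (x t ω) (e t ω)) (t : ℕ) :
    ∃ G : (Finset.range t → β) → α, Measurable G ∧ ∀ ω, x t ω = G fun i => e i ω := by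
  induction t with
  | zero => exact ⟨fun _ => x₀, measurable_const, h0⟩
  | succ t ih =>
    obtain ⟨G, hG, hxG⟩ := ih
    let restrict : (Finset.range (t + 1) → β) → Finset.range t → β :=
      fun v i => v ⟨i, Finset.mem_range_succ_iff.2 (Finset.mem_range.1 i.2).le⟩
    have hrestrict : Measurable restrict := measurable_pi_lambda _ fun i => measurable_pi_apply _
    refine ⟨fun v => f (G (restrict v)) (v ⟨t, Finset.self_mem_range_succ t⟩),
      hf.comp ((hG.comp hrestrict).prodMk (measurable_pi_apply _)), fun ω => ?_⟩
    rw [hrec, hxG]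

lemma indepFun_of_recursion [MeasurableSpace Ω] {μ : Measure Ω} {f : α → β → α}
    (hf : Measurable (Function.uncurry f)) {x : ℕ → Ω → α} {e : ℕ → Ω → β} {x₀ : α}
    (h0 : ∀ ω, x 0 ω = x₀) (hrec : ∀ t ω, x (t + 1) ω = f (x t ω) (e t ω))
    (he : iIndepFun e μ) (he_meas : ∀ t, AEMeasurable (e t) μ) (t : ℕ) :
    IndepFun (x t) (e t) μ := by
  obtain ⟨G, hG, hxG⟩ := exists_measurable_eq_of_recursion hf h0 hrec t
  have hpast := he.indepFun_finset₀ (Finset.range t) {t}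
    (Finset.disjoint_singleton_right.2 Finset.notMem_range_self) he_meas
  rw [show x t = G ∘ fun ω i => e i ω from funext hxG]
  exact hpast.comp hG (measurable_pi_apply ⟨t, Finset.mem_singleton_self t⟩)

lemma integral_dotProduct_mulVec_succ_of_recursion [MeasurableSpace Ω] {μ : Measure Ω}
    [IsFiniteMeasure μ] {n : Type*} [Fintype n] {Φ : Matrix n n ℝ} {x e : ℕ → Ω → n → ℝ}
    {x₀ : n → ℝ} (h0 : ∀ ω, x 0 ω = x₀) (hrec : ∀ t ω, x (t + 1) ω = Φ *ᵥ x t ω + e t ω)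
    (he : iIndepFun e μ) (he2 : ∀ t, MemLp (e t) 2 μ) (he0 : ∀ t, ∫ ω, e t ω ∂μ = 0)
    (hx2 : ∀ t, MemLp (x t) 2 μ) (M : Matrix n n ℝ) (t : ℕ) :
    ∫ ω, x (t + 1) ω ⬝ᵥ M *ᵥ x (t + 1) ω ∂μ
      = ∫ ω, Φ *ᵥ x t ω ⬝ᵥ M *ᵥ (Φ *ᵥ x t ω) ∂μ + ∫ ω, e t ω ⬝ᵥ M *ᵥ e t ω ∂μ := by
  have hindep : IndepFun (fun ω => Φ *ᵥ x t ω) (e t) μ :=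
    (indepFun_of_recursion (f := fun v w => Φ *ᵥ v + w) (by fun_prop) h0 hrec he
      (fun t => (he2 t).1.aemeasurable) t).comp
      (by fun_prop : Measurable (Φ *ᵥ ·)) measurable_id
  simp_rw [hrec t]
  exact hindep.integral_add_dotProduct_mulVec_add ((hx2 t).mulVec Φ) (he2 t) (he0 t) M

end Recursion

lemma tsum_geometric_mul_telescope {γ : ℝ} (hγ0 : 0 ≤ γ) (hγ1 : γ < 1) {a c : ℕ → ℝ} (σ : ℝ)
    (ha : Summable fun t => γ ^ t * a t) (hc : Summable fun t => γ ^ t * c t) :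
    ∑' t, γ ^ t * (γ * (a (t + 1) - σ) - a t + c t)
      = ∑' t, γ ^ t * c t - (a 0 + γ / (1 - γ) * σ) := by
  have hgeom : Summable fun t : ℕ => γ * σ * γ ^ t :=
    (summable_geometric_of_lt_one hγ0 hγ1).mul_left _
  have ha' : Summable fun t => γ ^ (t + 1) * a (t + 1) := (summable_nat_add_iff 1).2 ha
  have hsplit : ∀ t, γ ^ t * (γ * (a (t + 1) - σ) - a t + c t)
      = (γ ^ (t + 1) * a (t + 1) - γ ^ t * a t) - γ * σ * γ ^ t + γ ^ t * c t := fun t => by ring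
  rw [tsum_congr hsplit, ((ha'.sub ha).sub hgeom).tsum_add hc, (ha'.sub ha).tsum_sub hgeom,
    ha'.tsum_sub ha, ha.tsum_eq_zero_add, tsum_mul_left, tsum_geometric_of_lt_one hγ0 hγ1]
  ring

theorem stmt_15_general {d l : ℕ} {Ω : Type*} [MeasurableSpace Ω] (μ : Measure Ω)
    [IsProbabilityMeasure μ]
    (γ : ℝ) (hγ : γ ∈ Set.Ioo (0:ℝ) 1)
    (A Q P : Matrix (Fin d) (Fin d) ℝ) (hP : P.IsSymm)
    (B1 B2 : Matrix (Fin d) (Fin l) ℝ) (R1 R2 : Matrix (Fin l) (Fin l) ℝ)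
    (K1 K2 : Matrix (Fin l) (Fin d) ℝ)
    (ytilde : Fin d → ℝ) (y : ℕ → Ω → Fin d → ℝ) (ε : ℕ → Ω → Fin d → ℝ)
    (hy0 : ∀ ω, y 0 ω = ytilde)
    (hdyn : ∀ t ω, y (t + 1) ω =
      (A - B1 * K1 + B2 * K2).mulVec (y t ω) + ε (t + 1) ω)
    (hε2 : ∀ t, MemLp (ε (t + 1)) 2 μ)
    (hεmean : ∀ t, ∫ ω, ε (t + 1) ω ∂μ = 0)
    (hεindep : iIndepFun (fun t => ε (t + 1)) μ)
    (hεident : ∀ s t, IdentDistrib (ε (s + 1)) (ε (t + 1)) μ μ)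
    (hy2 : ∀ t, MemLp (y t) 2 μ)
    (hL2 : Summable (fun t => γ ^ t * ∫ ω, ‖y t ω‖ ^ 2 ∂μ)) :
    (∑' t : ℕ, γ ^ t * ∫ ω,
        (y t ω ⬝ᵥ Q.mulVec (y t ω)
          + K1.mulVec (y t ω) ⬝ᵥ R1.mulVec (K1.mulVec (y t ω))
          - K2.mulVec (y t ω) ⬝ᵥ R2.mulVec (K2.mulVec (y t ω))) ∂μ)
      - (ytilde ⬝ᵥ P.mulVec ytilde
          + γ / (1 - γ) * ∫ ω, ε 1 ω ⬝ᵥ P.mulVec (ε 1 ω) ∂μ)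
    = ∑' t : ℕ, γ ^ t * ∫ ω,
        (Sum.elim (y t ω) (Sum.elim (-(K1.mulVec (y t ω))) (K2.mulVec (y t ω)))) ⬝ᵥ
          (fromBlocks (γ • (Aᵀ * P * A) - P + Q)
            (fromCols (γ • (Aᵀ * P * B1)) (γ • (Aᵀ * P * B2)))
            (fromRows (γ • (Aᵀ * P * B1))ᵀ (γ • (Aᵀ * P * B2))ᵀ)
            (fromBlocks (γ • (B1ᵀ * P * B1) + R1) (γ • (B1ᵀ * P * B2))
              (γ • (B1ᵀ * P * B2))ᵀ (γ • (B2ᵀ * P * B2) - R2))).mulVec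
          (Sum.elim (y t ω) (Sum.elim (-(K1.mulVec (y t ω))) (K2.mulVec (y t ω)))) ∂μ := by
  obtain ⟨hγ0, hγ1⟩ := hγ
  set σ := ∫ ω, ε 1 ω ⬝ᵥ P *ᵥ ε 1 ω ∂μ
  have hnoise : ∀ t, ∫ ω, ε (t + 1) ω ⬝ᵥ P *ᵥ ε (t + 1) ω ∂μ = σ := fun t =>
    ((hεident t 0).comp (by fun_prop : Measurable fun x : Fin d → ℝ => x ⬝ᵥ P *ᵥ x)).integral_eq
  have hsummand : ∀ t, ∫ ω, Sum.elim (y t ω) (Sum.elim (-(K1 *ᵥ y t ω)) (K2 *ᵥ y t ω)) ⬝ᵥ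
        riccatiBlock γ A Q P B1 B2 R1 R2 *ᵥ
          Sum.elim (y t ω) (Sum.elim (-(K1 *ᵥ y t ω)) (K2 *ᵥ y t ω)) ∂μ
      = γ * (∫ ω, y (t + 1) ω ⬝ᵥ P *ᵥ y (t + 1) ω ∂μ - σ) - ∫ ω, y t ω ⬝ᵥ P *ᵥ y t ω ∂μ
        + ∫ ω, y t ω ⬝ᵥ (Q + K1ᵀ * R1 * K1 - K2ᵀ * R2 * K2) *ᵥ y t ω ∂μ := fun t => by
    rw [integral_dotProduct_riccatiBlock_mulVec_closedLoop γ A Q hP.eq B1 B2 R1 R2 K1 K2 (hy2 t),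
      integral_dotProduct_mulVec_succ_of_recursion hy0 hdyn hεindep hε2 hεmean hy2, hnoise,
      add_sub_cancel_right]
  have hsum := summable_mul_integral_dotProduct_mulVec (fun t => pow_nonneg hγ0.le t) hy2 hL2
  refine Eq.trans ?_ (tsum_congr fun t => congrArg (γ ^ t * ·) (hsummand t)).symm
  rw [tsum_geometric_mul_telescope hγ0.le hγ1 σ (hsum P) (hsum _)]
  simp_rw [mulVec_dotProduct_mulVec, ← dotProduct_add, ← dotProduct_sub, ← add_mulVec,
    ← sub_mulVec, hy0, integral_const, probReal_univ, one_smul]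

/-- Telescoped Lyapunov identity: for any symmetric `P`, the gap between the closed-loop
cost `C_y(K₁,K₂,ỹ)` and `C_y*(P;ỹ)` equals the discounted sum of the residual quadratic
form built from the Riccati blocks. -/
theorem stmt_15 {d l : ℕ} {Ω : Type*} [MeasurableSpace Ω] (μ : Measure Ω)
    [IsProbabilityMeasure μ]
    (γ : ℝ) (hγ : γ ∈ Set.Ioo (0:ℝ) 1)
    (A Q P : Matrix (Fin d) (Fin d) ℝ) (hP : P.IsSymm) (hQ : Q.IsSymm)
    (B1 B2 : Matrix (Fin d) (Fin l) ℝ) (R1 R2 : Matrix (Fin l) (Fin l) ℝ)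
    (hR1 : R1.IsSymm) (hR2 : R2.IsSymm)
    (K1 K2 : Matrix (Fin l) (Fin d) ℝ)
    (ytilde : Fin d → ℝ) (y : ℕ → Ω → Fin d → ℝ) (ε : ℕ → Ω → Fin d → ℝ)
    (hy0 : ∀ ω, y 0 ω = ytilde)
    (hdyn : ∀ t ω, y (t + 1) ω =
      (A - B1 * K1 + B2 * K2).mulVec (y t ω) + ε (t + 1) ω)
    (hε2 : ∀ t, MemLp (ε (t + 1)) 2 μ)
    (hεmean : ∀ t, ∫ ω, ε (t + 1) ω ∂μ = 0)
    (hεindep : iIndepFun (fun t => ε (t + 1)) μ)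
    (hεident : ∀ s t, IdentDistrib (ε (s + 1)) (ε (t + 1)) μ μ)
    (hy2 : ∀ t, MemLp (y t) 2 μ)
    (hL2 : Summable (fun t => γ ^ t * ∫ ω, ‖y t ω‖ ^ 2 ∂μ)) :
    (∑' t : ℕ, γ ^ t * ∫ ω,
        (y t ω ⬝ᵥ Q.mulVec (y t ω)
          + K1.mulVec (y t ω) ⬝ᵥ R1.mulVec (K1.mulVec (y t ω))
          - K2.mulVec (y t ω) ⬝ᵥ R2.mulVec (K2.mulVec (y t ω))) ∂μ)
      - (ytilde ⬝ᵥ P.mulVec ytilde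
          + γ / (1 - γ) * ∫ ω, ε 1 ω ⬝ᵥ P.mulVec (ε 1 ω) ∂μ)
    = ∑' t : ℕ, γ ^ t * ∫ ω,
        (Sum.elim (y t ω) (Sum.elim (-(K1.mulVec (y t ω))) (K2.mulVec (y t ω)))) ⬝ᵥ
          (fromBlocks (γ • (Aᵀ * P * A) - P + Q)
            (fromCols (γ • (Aᵀ * P * B1)) (γ • (Aᵀ * P * B2)))
            (fromRows (γ • (Aᵀ * P * B1))ᵀ (γ • (Aᵀ * P * B2))ᵀ)
            (fromBlocks (γ • (B1ᵀ * P * B1) + R1) (γ • (B1ᵀ * P * B2))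
              (γ • (B1ᵀ * P * B2))ᵀ (γ • (B2ᵀ * P * B2) - R2))).mulVec
          (Sum.elim (y t ω) (Sum.elim (-(K1.mulVec (y t ω))) (K2.mulVec (y t ω)))) ∂μ :=
  stmt_15_general μ γ hγ A Q P hP B1 B2 R1 R2 K1 K2 ytilde y ε hy0 hdyn hε2 hεmean hεindep hεident
    hy2 hL2
end
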